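/- The ordering J_1, J_2, ..., J_{n-d+1} of the maximal simplices J_i = [x_0, x_i, ..., x_{i+d-1}] of the pulling triangulation Δ of the d-braxtope Q^{d,n} is a shelling: for 2 ≤ j ≤ n-d+1, the unique minimal face of J_j not contained in ∪_{i<j} J_i is the vertex {x_{j+d-1}}. Consequently the h-vector of Δ is (1, n-d, 0, 0, ..., 0). -/

import Mathlib

open Set

noncomputable section

variable {V : Type*} [NormedAddCommGroup V] [NormedSpace ℝ V]

open Classical in
/-- Affine dimension of a set: `-1` for the empty set, otherwise the
dimension of its affine hull. -/
def sdim (s : Set V) : ℤ :=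
  if s.Nonempty then (Module.finrank ℝ (affineSpan ℝ s).direction : ℤ) else -1

/-- `F` is a face of the polytope `Q`. -/
def IsFaceOf (Q F : Set V) : Prop :=
  IsExtreme ℝ Q F ∧ Convex ℝ F ∧ IsClosed F

/-- `F` is a facet of the `d`-polytope `Q`. -/
def IsFacetOf (d : ℕ) (Q F : Set V) : Prop :=
  IsFaceOf Q F ∧ sdim F = (d : ℤ) - 1

/-- The segment `[a, b]` is an edge (a 1-dimensional face) of `Q`. -/
def IsEdgeOf (Q : Set V) (a b : V) : Prop :=
  IsFaceOf Q (segment ℝ a b) ∧ sdim (segment ℝ a b) = 1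

/-- Clamped vertex indexing: `x_t = x_0` for `t ≤ 0` and `x_t = x_n` for `t ≥ n`. -/
def xc {n : ℕ} (x : Fin (n + 1) → V) (t : ℤ) : V :=
  x ⟨(min (max t 0) n).toNat, by omega⟩

/-- The polytope spanned by the vertex array `x`. -/
def braxQ {n : ℕ} (x : Fin (n + 1) → V) : Set V :=
  convexHull ℝ (Set.range x)

/-- Vertex set of the simplex facet `T_i = [x_i, …, x_{i+d-1}]`. -/
def Tset (d : ℕ) {n : ℕ} (x : Fin (n + 1) → V) (i : ℤ) : Set V :=
  xc x '' Set.Icc i (i + (d : ℤ) - 1)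

/-- Vertex set of the facet
`E_j = [x_0, x_{j-(d-2)}, …, x_{j-1}, x_{j+1}, …, x_{j+(d-2)}]`. -/
def Eset (d : ℕ) {n : ℕ} (x : Fin (n + 1) → V) (j : ℤ) : Set V :=
  insert (x 0) (xc x '' (Set.Icc (j - ((d : ℤ) - 2)) (j + ((d : ℤ) - 2)) \ {j}))

/-- `x_0 < x_1 < ⋯ < x_n` is the vertex array of a `d`-braxtope: for `d ≤ 2` a
`d`-simplex; for `d ≥ 3` a `d`-polytope whose facets are exactly the `T_i`
(`0 ≤ i ≤ n - d + 1`) and the `E_j` (`2 ≤ j ≤ n`). -/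
def IsBraxtope (d n : ℕ) (x : Fin (n + 1) → V) : Prop :=
  (d ≤ 2 → n = d ∧ AffineIndependent ℝ x) ∧
  (3 ≤ d →
    d ≤ n ∧ Function.Injective x ∧
    sdim (braxQ x) = d ∧
    (∀ i, x i ∈ Set.extremePoints ℝ (braxQ x)) ∧
    (∀ F : Set V, IsFacetOf d (braxQ x) F ↔
      (∃ i : ℤ, 0 ≤ i ∧ i ≤ (n : ℤ) - d + 1 ∧ F = convexHull ℝ (Tset d x i)) ∨
      (∃ j : ℤ, 2 ≤ j ∧ j ≤ (n : ℤ) ∧ F = convexHull ℝ (Eset d x j))))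


/-- The simplex `J_i = [x_0, x_i, x_{i+1}, …, x_{i+d-1}]` of the pulling
triangulation of the braxtope at `x_0`. -/
def Jverts (d : ℕ) {n : ℕ} (x : Fin (n + 1) → V) (i : ℤ) : Set V :=
  insert (x 0) (xc x '' Set.Icc i (i + (d : ℤ) - 1))

def Jset (d : ℕ) {n : ℕ} (x : Fin (n + 1) → V) (i : ℤ) : Set V :=
  convexHull ℝ (Jverts d x i)

/-- The restriction (unique minimal new face) of the simplex `J_j` in the
ordering `J_1, J_2, …`: the vertices `v` of `J_j` all of whose opposite facets
already lie in the earlier simplices. -/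
def shellRestr (d : ℕ) {n : ℕ} (x : Fin (n + 1) → V) (j : ℤ) : Set V :=
  {v ∈ Jverts d x j |
    convexHull ℝ (Jverts d x j \ {v}) ⊆ ⋃ i ∈ Set.Ico (1 : ℤ) j, Jset d x i}

omit [NormedAddCommGroup V] [NormedSpace ℝ V] in
lemma xc_eq {n : ℕ} (x : Fin (n + 1) → V) {t : ℤ} (h0 : 0 ≤ t) (hn : t ≤ (n : ℤ)) :
    xc x t = x ⟨t.toNat, by omega⟩ := by
  unfold xc
  congr 1
  apply Fin.ext
  show (min (max t 0) (n : ℤ)).toNat = t.toNat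
  omega

lemma mem_extremePoints_of_subset {Q B : Set V} {v : V} (hBQ : B ⊆ Q)
    (hv : v ∈ Q.extremePoints ℝ) (hvB : v ∈ B) : v ∈ B.extremePoints ℝ :=
  ⟨hvB, fun _ h1 _ h2 h ↦ hv.2 (hBQ h1) (hBQ h2) h⟩

/-- The ordering `J_1, …, J_{n-d+1}` of the pulling triangulation of the
braxtope is a shelling: for `2 ≤ j ≤ n - d + 1`, a face of `J_j` lies in the
earlier simplices iff it misses the vertex `x_{j+d-1}`; so the unique minimal
new face of `J_j` is `{x_{j+d-1}}`, and the `h`-vector of the triangulation is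
`(1, n - d, 0, …, 0)`. -/

theorem braxtope_shelling_hvector (d n : ℕ) (hd : 3 ≤ d) (hn : d ≤ n)
    (x : Fin (n + 1) → V) (hx : IsBraxtope d n x) :
    (∀ j : ℤ, 2 ≤ j → j ≤ (n : ℤ) - d + 1 →
      ∀ S : Set V, S ⊆ Jverts d x j → S.Nonempty →
        (convexHull ℝ S ⊆ ⋃ i ∈ Set.Ico (1 : ℤ) j, Jset d x i ↔
          xc x (j + d - 1) ∉ S)) ∧
    (∀ k : ℕ,
      {j : ℤ | 1 ≤ j ∧ j ≤ (n : ℤ) - d + 1 ∧ (shellRestr d x j).ncard = k}.ncard =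
        if k = 0 then 1 else if k = 1 then n - d else 0) := by
  have hd3 : (3 : ℤ) ≤ (d : ℤ) := by exact_mod_cast hd
  have hnd : (d : ℤ) ≤ (n : ℤ) := by exact_mod_cast hn
  obtain ⟨-, hinj, -, hext, -⟩ := hx.2 hd
  -- injectivity of clamped indexing within range
  have hxcinj : ∀ s t : ℤ, 0 ≤ s → s ≤ n → 0 ≤ t → t ≤ n → xc x s = xc x t → s = t := by
    intro s t hs hs' ht ht' h
    rw [xc_eq x hs hs', xc_eq x ht ht'] at h
    have h2 := congrArg Fin.val (hinj h)
    simp only at h2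
    omega
  have hJrange : ∀ i : ℤ, Jverts d x i ⊆ Set.range x := by
    intro i w hw
    rcases hw with h | ⟨t, _, rfl⟩
    · exact ⟨0, h.symm⟩
    · exact ⟨_, rfl⟩
  have hJQ : ∀ i : ℤ, convexHull ℝ (Jverts d x i) ⊆ braxQ x :=
    fun i => convexHull_mono (hJrange i)
  -- x 0 is distinct from xc x t for 1 ≤ t ≤ n
  have hx0ne : ∀ t : ℤ, 1 ≤ t → t ≤ n → x 0 ≠ xc x t := by
    intro t ht ht' h
    rw [xc_eq x (by omega) ht'] at h
    have h2 := congrArg Fin.val (hinj h)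
    simp only [Fin.val_zero] at h2
    omega
  -- Part 1
  have key : ∀ j : ℤ, 2 ≤ j → j ≤ (n : ℤ) - d + 1 →
      ∀ S : Set V, S ⊆ Jverts d x j → S.Nonempty →
        (convexHull ℝ S ⊆ ⋃ i ∈ Set.Ico (1 : ℤ) j, Jset d x i ↔
          xc x (j + d - 1) ∉ S) := by
    intro j hj2 hjN S hS _
    constructor
    · intro hsub hvS
      have hvQ : xc x (j + d - 1) ∈ ⋃ i ∈ Set.Ico (1 : ℤ) j, Jset d x i :=
        hsub (subset_convexHull ℝ S hvS)
      rw [Set.mem_iUnion₂] at hvQ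
      obtain ⟨i, hi, hvi⟩ := hvQ
      rw [Set.mem_Ico] at hi
      have hvx : xc x (j + d - 1) = x ⟨(j + d - 1).toNat, by omega⟩ :=
        xc_eq x (by omega) (by omega)
      have hvext : xc x (j + d - 1) ∈ (braxQ x).extremePoints ℝ := by
        rw [hvx]; exact hext _
      have hvmem : xc x (j + d - 1) ∈ Jverts d x i :=
        extremePoints_convexHull_subset
          (mem_extremePoints_of_subset (hJQ i) hvext hvi)
      rcases hvmem with h | ⟨t, ht, hteq⟩
      · exact hx0ne (j + d - 1) (by omega) (by omega) h.symm
      · rw [Set.mem_Icc] at ht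
        have := hxcinj t (j + d - 1) (by omega) (by omega) (by omega) (by omega) hteq
        omega
    · intro hvS
      have hS' : S ⊆ Jverts d x (j - 1) := by
        intro w hw
        rcases hS hw with h | ⟨t, ht, rfl⟩
        · exact Or.inl h
        · rw [Set.mem_Icc] at ht
          have htne : t ≠ j + d - 1 := by
            intro he; exact hvS (he ▸ hw)
          exact Or.inr ⟨t, Set.mem_Icc.2 ⟨by omega, by omega⟩, rfl⟩
      have hfin : Jset d x (j - 1) ⊆ ⋃ i ∈ Set.Ico (1 : ℤ) j, Jset d x i :=
        Set.subset_biUnion_of_mem (Set.mem_Ico.2 ⟨by omega, by omega⟩)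
      exact (convexHull_mono hS').trans hfin
  refine ⟨key, ?_⟩
  -- the restriction sets
  have hJne : ∀ j : ℤ, 1 ≤ j → j ≤ (n : ℤ) - d + 1 → ∀ v : V,
      (Jverts d x j \ {v}).Nonempty := by
    intro j hj hj' v
    have hb : xc x j ∈ Jverts d x j :=
      Or.inr ⟨j, Set.mem_Icc.2 ⟨le_refl _, by omega⟩, rfl⟩
    have hab : x 0 ≠ xc x j := hx0ne j hj (by omega)
    by_cases hv : v = x 0
    · refine ⟨xc x j, hb, fun h => hab ?_⟩
      exact ((Set.mem_singleton_iff.1 h).trans hv).symm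
    · exact ⟨x 0, Or.inl rfl, fun h => hv (Set.mem_singleton_iff.1 h).symm⟩
  have hR1 : shellRestr d x 1 = ∅ := by
    ext v
    simp only [shellRestr, Set.mem_setOf_eq, Set.mem_empty_iff_false, iff_false, not_and]
    intro _ hsub
    have : (⋃ i ∈ Set.Ico (1 : ℤ) 1, Jset d x i) = ∅ := by
      simp [Set.Ico_self]
    rw [this, Set.subset_empty_iff, convexHull_eq_empty] at hsub
    exact (hJne 1 le_rfl (by omega) v).ne_empty hsub
  have hRj : ∀ j : ℤ, 2 ≤ j → j ≤ (n : ℤ) - d + 1 →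
      shellRestr d x j = {xc x (j + d - 1)} := by
    intro j hj2 hjN
    have hvmem : xc x (j + d - 1) ∈ Jverts d x j :=
      Or.inr ⟨j + d - 1, Set.mem_Icc.2 ⟨by omega, le_refl _⟩, rfl⟩
    ext v
    simp only [shellRestr, Set.mem_setOf_eq, Set.mem_singleton_iff]
    constructor
    · rintro ⟨hvJ, hsub⟩
      have := (key j hj2 hjN (Jverts d x j \ {v}) Set.diff_subset
        (hJne j (by omega) hjN v)).1 hsub
      by_contra hne
      exact this ⟨hvmem, fun h => hne (Set.mem_singleton_iff.1 h).symm⟩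
    · rintro rfl
      refine ⟨hvmem, ?_⟩
      refine (key j hj2 hjN (Jverts d x j \ {xc x (j + d - 1)}) Set.diff_subset
        (hJne j (by omega) hjN _)).2 ?_
      intro h
      exact h.2 rfl
  -- counting
  intro k
  match k with
  | 0 =>
    have hset : {j : ℤ | 1 ≤ j ∧ j ≤ (n : ℤ) - d + 1 ∧ (shellRestr d x j).ncard = 0}
        = {1} := by
      ext j
      simp only [Set.mem_setOf_eq, Set.mem_singleton_iff]
      constructor
      · rintro ⟨h1, h2, h3⟩
        by_contra hne
        rw [hRj j (by omega) h2] at h3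
        simp [Set.ncard_singleton] at h3
      · rintro rfl
        exact ⟨le_rfl, by omega, by rw [hR1]; simp⟩
    rw [hset]
    simp
  | 1 =>
    have hset : {j : ℤ | 1 ≤ j ∧ j ≤ (n : ℤ) - d + 1 ∧ (shellRestr d x j).ncard = 1}
        = Set.Icc (2 : ℤ) ((n : ℤ) - d + 1) := by
      ext j
      simp only [Set.mem_setOf_eq, Set.mem_Icc]
      constructor
      · rintro ⟨h1, h2, h3⟩
        refine ⟨?_, h2⟩
        by_contra hne
        have : j = 1 := by omega
        rw [this, hR1] at h3
        simp at h3
      · rintro ⟨h1, h2⟩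
        exact ⟨by omega, h2, by rw [hRj j h1 h2]; exact Set.ncard_singleton _⟩
    rw [hset, show Set.Icc (2 : ℤ) ((n : ℤ) - d + 1)
        = ↑(Finset.Icc (2 : ℤ) ((n : ℤ) - d + 1)) from (Finset.coe_Icc _ _).symm,
      Set.ncard_coe_finset, Int.card_Icc]
    have hrhs : (if (1 : ℕ) = 0 then 1 else if 1 = 1 then n - d else 0) = n - d := by
      norm_num
    rw [hrhs]
    omega
  | (m + 2) =>
    have hset : {j : ℤ | 1 ≤ j ∧ j ≤ (n : ℤ) - d + 1 ∧ (shellRestr d x j).ncard = m + 2}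
        = ∅ := by
      ext j
      simp only [Set.mem_setOf_eq, Set.mem_empty_iff_false, iff_false, not_and]
      rintro h1 h2 h3
      by_cases hj : j = 1
      · rw [hj, hR1] at h3; simp at h3
      · rw [hRj j (by omega) h2] at h3; simp [Set.ncard_singleton] at h3
    rw [hset]
    simp
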